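/- arXiv:2506.08692 — 3 statements merged into one kernel-verified Lean document; each statement's English description precedes it below -/
import Mathlib

section
/- Let G be the simple graph obtained from a triangle K on 3 vertices by adding four new vertices x1, y1, x2, y2 with edges x1y1 and x2y2, where each of x1, y1, x2, y2 has at least two neighbors in K. Then G contains a cycle of length 4 and a cycle of length 6. -/
/-- `G` contains a cycle of length `k`. -/
def HasCycleOfLength {V : Type*} (G : SimpleGraph V) (k : ℕ) : Prop :=
  ∃ (v : V) (c : G.Walk v v), c.IsCycle ∧ c.length = k

/-!
Write `N(x)` for the neighbours of `x` in the triangle `K`. A 4-cycle is `x₁ y₁ v u`, where `u` is a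
neighbour of `x₁` and `v ≠ u` a second neighbour of `y₁`. For the 6-cycle, two subsets of size at
least 2 of the 3-set `K` meet, so there are `m ∈ N(y₁) ∩ N(x₂)` and `n ∈ N(x₁) ∩ N(y₂)`. If `m ≠ n`,
the cycle is `x₁ y₁ m x₂ y₂ n`. If `m = n`, take `p ∈ N(y₁)` and `q ∈ N(x₂)` other than `m`:
for `p = q` the cycle is `x₁ y₁ p x₂ y₂ m`, otherwise it is `x₁ y₁ p q x₂ m`, using the edge `pq`
of `K`.
-/

open SimpleGraph

theorem Set.inter_nonempty_of_ncard_lt_ncard_add_ncard {α : Type*} {s t u : Set α}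
    (hs : s.Finite) (hts : t ⊆ s) (hus : u ⊆ s) (hstu : s.ncard < t.ncard + u.ncard) :
    (t ∩ u).Nonempty := by
  contrapose! hstu
  calc t.ncard + u.ncard = (t ∪ u).ncard :=
        (ncard_union_eq (disjoint_iff_inter_eq_empty.mpr hstu) (hs.subset hts)
          (hs.subset hus)).symm
    _ ≤ s.ncard := ncard_le_ncard (union_subset hts hus) hs

section

variable {V : Type*} {G : SimpleGraph V}

lemma hasCycleOfLength_four {a b c d : V}
    (hab : G.Adj a b) (hbc : G.Adj b c) (hcd : G.Adj c d) (hda : G.Adj d a)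
    (hac : a ≠ c) (hbd : b ≠ d) : HasCycleOfLength G 4 := by
  refine ⟨a, .cons hab (.cons hbc (.cons hcd hda.toWalk)), ?_, rfl⟩
  rw [Walk.cons_isCycle_iff]
  simp [Walk.isPath_def, hab.ne', hbc.ne, hcd.ne, hda.ne, hac, hbd, hac.symm]

lemma hasCycleOfLength_six {a b c d e f : V}
    (hab : G.Adj a b) (hbc : G.Adj b c) (hcd : G.Adj c d) (hde : G.Adj d e)
    (hef : G.Adj e f) (hfa : G.Adj f a)
    (hac : a ≠ c) (had : a ≠ d) (hae : a ≠ e) (hbd : b ≠ d) (hbe : b ≠ e) (hbf : b ≠ f)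
    (hce : c ≠ e) (hcf : c ≠ f) (hdf : d ≠ f) : HasCycleOfLength G 6 := by
  refine ⟨a, .cons hab (.cons hbc (.cons hcd (.cons hde (.cons hef hfa.toWalk)))), ?_, rfl⟩
  rw [Walk.cons_isCycle_iff]
  simp [Walk.isPath_def, hab.ne', hbc.ne, hcd.ne, hde.ne, hef.ne, hfa.ne,
    hac, had, hae, hbd, hbe, hbf, hce, hcf, hdf, hac.symm, had.symm, hae.symm]

lemma hasCycleOfLength_four_of_isClique {K : Set V} (hK : G.IsClique K) {x y : V}
    (hxy : G.Adj x y) (hx : x ∉ K) (hy : y ∉ K) (hNx : {v ∈ K | G.Adj x v}.Nonempty)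
    (hNy : 1 < {v ∈ K | G.Adj y v}.ncard) : HasCycleOfLength G 4 := by
  obtain ⟨u, huK, hxu⟩ := hNx
  obtain ⟨v, ⟨hvK, hyv⟩, hvu⟩ := Set.exists_ne_of_one_lt_ncard hNy u
  exact hasCycleOfLength_four hxy hyv (hK hvK huK hvu) hxu.symm
    (ne_of_mem_of_not_mem hvK hx).symm (ne_of_mem_of_not_mem huK hy).symm

lemma hasCycleOfLength_six_of_isClique {K : Set V} (hK : G.IsClique K) (hK3 : K.ncard = 3)
    {x₁ y₁ x₂ y₂ : V} (hx₁ : x₁ ∉ K) (hy₁ : y₁ ∉ K) (hx₂ : x₂ ∉ K) (hy₂ : y₂ ∉ K)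
    (hx₁x₂ : x₁ ≠ x₂) (hx₁y₂ : x₁ ≠ y₂) (hy₁x₂ : y₁ ≠ x₂) (hy₁y₂ : y₁ ≠ y₂)
    (hadj₁ : G.Adj x₁ y₁) (hadj₂ : G.Adj x₂ y₂)
    (hn₁ : 2 ≤ {v ∈ K | G.Adj x₁ v}.ncard) (hn₂ : 2 ≤ {v ∈ K | G.Adj y₁ v}.ncard)
    (hn₃ : 2 ≤ {v ∈ K | G.Adj x₂ v}.ncard) (hn₄ : 2 ≤ {v ∈ K | G.Adj y₂ v}.ncard) :
    HasCycleOfLength G 6 := by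
  have hfin : K.Finite := Set.finite_of_ncard_ne_zero (by omega)
  obtain ⟨m, ⟨hmK, hy₁m⟩, -, hx₂m⟩ := Set.inter_nonempty_of_ncard_lt_ncard_add_ncard hfin
    (Set.sep_subset K (G.Adj y₁)) (Set.sep_subset K (G.Adj x₂)) (by omega)
  obtain ⟨n, ⟨hnK, hx₁n⟩, -, hy₂n⟩ := Set.inter_nonempty_of_ncard_lt_ncard_add_ncard hfin
    (Set.sep_subset K (G.Adj x₁)) (Set.sep_subset K (G.Adj y₂)) (by omega)
  have outside {w : V} (hw : w ∈ K) {z : V} (hz : z ∉ K) : z ≠ w :=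
    (ne_of_mem_of_not_mem hw hz).symm
  by_cases hmn : m = n
  · subst hmn
    obtain ⟨p, ⟨hpK, hy₁p⟩, hpm⟩ := Set.exists_ne_of_one_lt_ncard hn₂ m
    obtain ⟨q, ⟨hqK, hx₂q⟩, hqm⟩ := Set.exists_ne_of_one_lt_ncard hn₃ m
    by_cases hpq : p = q
    · subst hpq
      exact hasCycleOfLength_six hadj₁ hy₁p hx₂q.symm hadj₂ hy₂n hx₁n.symm (outside hpK hx₁)
        hx₁x₂ hx₁y₂ hy₁x₂ hy₁y₂ (outside hmK hy₁) (outside hpK hy₂).symm hpm (outside hmK hx₂)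
    · exact hasCycleOfLength_six hadj₁ hy₁p (hK hpK hqK hpq) hx₂q.symm hx₂m hx₁n.symm
        (outside hpK hx₁) (outside hqK hx₁) hx₁x₂ (outside hqK hy₁) hy₁x₂ (outside hmK hy₁)
        (outside hpK hx₂).symm hpm hqm
  · exact hasCycleOfLength_six hadj₁ hy₁m hx₂m.symm hadj₂ hy₂n hx₁n.symm (outside hmK hx₁)
      hx₁x₂ hx₁y₂ hy₁x₂ hy₁y₂ (outside hnK hy₁) (outside hmK hy₂).symm hmn (outside hnK hx₂)

end

theorem stmt_2 {V : Type*} [DecidableEq V] (G : SimpleGraph V) (K : Finset V) (x₁ y₁ x₂ y₂ : V)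
    (hK : K.card = 3)
    (hKcomplete : ∀ u ∈ K, ∀ v ∈ K, u ≠ v → G.Adj u v)
    (hx₁ : x₁ ∉ K) (hy₁ : y₁ ∉ K) (hx₂ : x₂ ∉ K) (hy₂ : y₂ ∉ K)
    (hdist : ({x₁, y₁, x₂, y₂} : Finset V).card = 4)
    (hadj₁ : G.Adj x₁ y₁) (hadj₂ : G.Adj x₂ y₂)
    (hn₁ : 2 ≤ {v ∈ (K : Set V) | G.Adj x₁ v}.ncard)
    (hn₂ : 2 ≤ {v ∈ (K : Set V) | G.Adj y₁ v}.ncard)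
    (hn₃ : 2 ≤ {v ∈ (K : Set V) | G.Adj x₂ v}.ncard)
    (hn₄ : 2 ≤ {v ∈ (K : Set V) | G.Adj y₂ v}.ncard) :
    HasCycleOfLength G 4 ∧ HasCycleOfLength G 6 := by
  have hclique : G.IsClique (K : Set V) := hKcomplete
  have hnodup : [x₁, y₁, x₂, y₂].Nodup :=
    (Multiset.toFinset_card_eq_card_iff_nodup (m := ([x₁, y₁, x₂, y₂] : Multiset V))).mp
      (by simpa using hdist)
  simp only [List.nodup_cons, List.mem_cons, List.not_mem_nil, not_or, not_false_eq_true,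
    and_true] at hnodup
  obtain ⟨⟨-, hx₁x₂, hx₁y₂⟩, ⟨hy₁x₂, hy₁y₂⟩, -⟩ := hnodup
  refine ⟨hasCycleOfLength_four_of_isClique hclique hadj₁ hx₁ hy₁
    (Set.nonempty_of_ncard_ne_zero (by omega)) hn₂, ?_⟩
  exact hasCycleOfLength_six_of_isClique hclique (by rw [Set.ncard_coe_finset, hK])
    hx₁ hy₁ hx₂ hy₂ hx₁x₂ hx₁y₂ hy₁x₂ hy₁y₂ hadj₁ hadj₂ hn₁ hn₂ hn₃ hn₄
end

section
/- For n ≥ 2, writing n - 1 = 4q + r with 0 ≤ r < 4, there exists an n-vertex graph with exactly 10q + (r+1 choose 2) edges containing no cycle of length congruent to 2 modulo 4. -/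
/-!
The witness is the windmill graph: a centre `0` adjacent to every other vertex, the remaining
vertices grouped into consecutive blades `{4k+1, …, 4k+4}`, each a clique. On `n = 4q + r + 1`
vertices these are `q` copies of `K₅` and one `K_{r+1}` glued at the centre, so the degrees are
`4q + r` (centre), `4` (full blades) and `r` (last blade), and the edge count follows from the
handshake lemma. The centre is a cut vertex separating the blades, so every cycle lies in a single
block and has length `3`, `4` or `5`, never `≡ 2 (mod 4)`.
-/

open Finset SimpleGraph

namespace SimpleGraph.Walk

variable {V α : Type*} {G : SimpleGraph V}

theorem IsCycle.length_le_card_of_support_subset [DecidableEq V] {v : V} {c : G.Walk v v}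
    (hc : c.IsCycle) {S : Finset V} (hS : ∀ w ∈ c.support, w ∈ S) : c.length ≤ #S := by
  have hlen : c.support.tail.length = c.length := by simp [length_support]
  rw [← hlen, ← List.toFinset_card_of_nodup hc.support_nodup]
  exact card_le_card fun w hw ↦ hS w (List.mem_of_mem_tail (List.mem_toFinset.1 hw))

-- Below, `hG` says that `h` is a cut vertex of `G` separating the fibres of `f`.

theorem apply_eq_of_notMem_support {h : V} {f : V → α}
    (hG : ∀ ⦃v w⦄, G.Adj v w → v ≠ h → w ≠ h → f v = f w) {a b : V} (p : G.Walk a b)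
    (hp : h ∉ p.support) : ∀ w ∈ p.support, f w = f a := by
  induction p with
  | nil => simp
  | @cons a x b hax p ih =>
    simp only [support_cons, List.mem_cons, not_or] at hp ⊢
    rintro w (rfl | hw)
    · rfl
    · rw [ih hp.2 w hw, ← hG hax (Ne.symm hp.1) (fun hx ↦ hp.2 (hx ▸ p.start_mem_support))]

theorem IsPath.eq_or_apply_eq {h : V} {f : V → α}
    (hG : ∀ ⦃v w⦄, G.Adj v w → v ≠ h → w ≠ h → f v = f w) {a : V} {p : G.Walk a h}
    (hp : p.IsPath) (ha : a ≠ h) : ∀ w ∈ p.support, w = h ∨ f w = f a := by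
  induction p with
  | nil => exact absurd rfl ha
  | @cons a x h hax p ih =>
    rw [cons_isPath_iff] at hp
    intro w hw
    rw [support_cons, List.mem_cons] at hw
    rcases hw with rfl | hw
    · exact Or.inr rfl
    · by_cases hx : x = h
      · subst hx
        rw [(isPath_iff_nil.1 hp.1).eq_nil, support_nil, List.mem_singleton] at hw
        exact Or.inl hw
      · rcases ih hG hp.1 hx w hw with hw | hw
        · exact Or.inl hw
        · exact Or.inr (hw.trans (hG hax ha hx).symm)

theorem IsCycle.exists_support_subset [DecidableEq V] {h : V} {f : V → α}
    (hG : ∀ ⦃v w⦄, G.Adj v w → v ≠ h → w ≠ h → f v = f w) {v : V} {c : G.Walk v v}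
    (hc : c.IsCycle) : ∃ k, ∀ w ∈ c.support, w = h ∨ f w = k := by
  by_cases hv : h ∈ c.support
  · have hc' := hc.rotate hv
    generalize hrot : c.rotate h hv = c' at hc'
    cases c' with
    | nil => exact absurd hc' not_isCycle_nil
    | @cons _ x _ hhx p =>
      rw [cons_isCycle_iff] at hc'
      refine ⟨f x, fun w hw ↦ ?_⟩
      rw [← mem_support_rotate_iff c h hv, hrot, support_cons, List.mem_cons] at hw
      exact hw.elim Or.inl (hc'.1.eq_or_apply_eq hG hhx.ne.symm w)
  · exact ⟨f v, fun w hw ↦ Or.inr (apply_eq_of_notMem_support hG c hv w hw)⟩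

end SimpleGraph.Walk

def windmill : SimpleGraph ℕ where
  Adj a b := a ≠ b ∧ (a = 0 ∨ b = 0 ∨ (a + 3) / 4 = (b + 3) / 4)
  symm := ⟨fun _ _ hab ↦ ⟨hab.1.symm, by omega⟩⟩
  loopless := ⟨fun _ haa ↦ haa.1 rfl⟩

namespace windmill

theorem adj_iff {a b : ℕ} :
    windmill.Adj a b ↔ a ≠ b ∧ (a = 0 ∨ b = 0 ∨ (a + 3) / 4 = (b + 3) / 4) :=
  Iff.rfl

instance : DecidableRel windmill.Adj := fun _ _ ↦ decidable_of_iff' _ adj_iff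

theorem length_le_five_of_isCycle {n : ℕ} {v : Fin n} {c : (windmill.comap Fin.val).Walk v v}
    (hc : c.IsCycle) : c.length ≤ 5 := by
  let hub : Fin n := ⟨0, v.pos⟩
  obtain ⟨k, hk⟩ := hc.exists_support_subset (h := hub) (f := fun w ↦ (w.val + 3) / 4)
    (fun w x hwx hw hx ↦ by
      simp only [comap_adj, adj_iff, ne_eq, Fin.ext_iff, hub] at hwx hw hx
      omega)
  refine hc.length_le_card_of_support_subset (S := {w | w = hub ∨ (w.val + 3) / 4 = k})
    (fun w hw ↦ by simpa using hk w hw) |>.trans ?_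
  calc #{w : Fin n | w = hub ∨ (w.val + 3) / 4 = k}
      ≤ #(insert 0 (Ico (4 * k - 3) (4 * k + 1))) := by
        refine card_le_card_of_injOn Fin.val (fun w hw ↦ ?_) Fin.val_injective.injOn
        simp only [coe_filter, mem_univ, true_and, Set.mem_ofPred_eq, Fin.ext_iff, hub] at hw
        simp only [coe_insert, coe_Ico, Set.mem_insert_iff, Set.mem_Ico]
        omega
    _ ≤ 5 := by
        grw [card_insert_le, Nat.card_Ico]
        omega

theorem card_filter_adj_zero (m : ℕ) : #{b ∈ range (m + 1) | windmill.Adj 0 b} = m := by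
  have : {b ∈ range (m + 1) | windmill.Adj 0 b} = Ico 1 (m + 1) := by
    ext b
    simp only [mem_filter, adj_iff, mem_range, mem_Ico, true_or, and_true]
    omega
  rw [this, Nat.card_Ico, Nat.add_sub_cancel]

theorem card_filter_adj_of_lt {q r s : ℕ} (hs : s < 4 * q) :
    #{b ∈ range (4 * q + r + 1) | windmill.Adj (s + 1) b} = 4 := by
  have : {b ∈ range (4 * q + r + 1) | windmill.Adj (s + 1) b}
      = insert 0 ((Ico (4 * (s / 4) + 1) (4 * (s / 4) + 5)).erase (s + 1)) := by
    ext b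
    simp only [mem_filter, adj_iff, mem_range, mem_insert, mem_erase, mem_Ico]
    omega
  rw [this, card_insert_of_notMem (by simp), card_erase_of_mem (by simp; omega), Nat.card_Ico]
  omega

theorem card_filter_adj_of_le {q r s : ℕ} (hr : r < 4) (hqs : 4 * q ≤ s) (hs : s < 4 * q + r) :
    #{b ∈ range (4 * q + r + 1) | windmill.Adj (s + 1) b} = r := by
  have : {b ∈ range (4 * q + r + 1) | windmill.Adj (s + 1) b}
      = insert 0 ((Ico (4 * q + 1) (4 * q + r + 1)).erase (s + 1)) := by
    ext b
    simp only [mem_filter, adj_iff, mem_range, mem_insert, mem_erase, mem_Ico]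
    omega
  rw [this, card_insert_of_notMem (by simp), card_erase_of_mem (by simp; omega), Nat.card_Ico]
  omega

theorem sum_card_filter_adj {q r : ℕ} (hr : r < 4) :
    ∑ a ∈ range (4 * q + r + 1), #{b ∈ range (4 * q + r + 1) | windmill.Adj a b}
      = 20 * q + (r + 1) * r := by
  rw [sum_range_succ', card_filter_adj_zero, sum_range_add,
    sum_congr rfl fun s hs ↦ card_filter_adj_of_lt (r := r) (mem_range.1 hs),
    sum_congr rfl fun t ht ↦ card_filter_adj_of_le hr (by omega) (by simp at ht; omega)]
  simp only [sum_const, card_range, smul_eq_mul]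
  ring

theorem degree_comap_val {n : ℕ} (v : Fin n) :
    (windmill.comap Fin.val).degree v = #{b ∈ range n | windmill.Adj v b} := by
  rw [← card_neighborFinset_eq_degree, neighborFinset_eq_filter, ← Nat.Iio_eq_range,
    ← Fin.map_valEmbedding_univ, filter_map, card_map]
  rfl

end windmill

theorem stmt_12 (n q r : ℕ) (hn : 2 ≤ n) (hqr : n - 1 = 4 * q + r) (hr : r < 4) :
    ∃ G : SimpleGraph (Fin n),
      G.edgeSet.ncard = 10 * q + (r + 1).choose 2 ∧
      ∀ (v : Fin n) (c : G.Walk v v), c.IsCycle → c.length % 4 ≠ 2 := by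
  obtain rfl : n = 4 * q + r + 1 := by omega
  refine ⟨windmill.comap Fin.val, ?_, fun v c hc ↦ ?_⟩
  · have handshake :=
      (windmill.comap (Fin.val (n := 4 * q + r + 1))).sum_degrees_eq_twice_card_edges
    simp only [windmill.degree_comap_val] at handshake
    rw [Fin.sum_univ_eq_sum_range (fun a ↦ #{b ∈ range _ | windmill.Adj a b}),
      windmill.sum_card_filter_adj hr] at handshake
    have hchoose := Nat.add_one_mul_choose_eq r 1
    rw [Nat.choose_one_right] at hchoose
    rw [← coe_edgeFinset, Set.ncard_coe_finset]
    lia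
  · have := hc.three_le_length
    have := windmill.length_le_five_of_isCycle hc
    omega
end

section
/- For n ≥ 6, the maximum number of edges in an n-vertex graph containing no cycle of length congruent to 1 modulo 4 equals ⌊n²/4⌋. -/
open Finset

def NoBad {V : Type*} (G : SimpleGraph V) : Prop :=
  ∀ (v : V) (c : G.Walk v v), c.IsCycle → c.length % 4 ≠ 1

lemma c5_absurd {V : Type*} {G : SimpleGraph V} (h : NoBad G) {a b c d e : V}
    (hab : G.Adj a b) (hbc : G.Adj b c) (hcd : G.Adj c d) (hde : G.Adj d e)
    (hea : G.Adj e a) (h1 : a ≠ c) (h2 : a ≠ d) (h3 : b ≠ d) (h4 : b ≠ e)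
    (h5 : c ≠ e) : False := by
  let w : G.Walk a a :=
    .cons hab (.cons hbc (.cons hcd (.cons hde (.cons hea .nil))))
  have hcyc : w.IsCycle := by
    constructor
    · constructor
      · simp only [w, SimpleGraph.Walk.isTrail_def, SimpleGraph.Walk.edges_cons,
          SimpleGraph.Walk.edges_nil, List.nodup_cons, List.mem_cons, List.not_mem_nil]
        refine ⟨?_, ?_, ?_, ?_, by simp⟩ <;>
          simp [Sym2.eq_iff] <;>
          aesop (add safe [hab.ne, hbc.ne, hcd.ne, hde.ne, hea.ne])
      · simp [w]
    · simp only [w, SimpleGraph.Walk.support_cons, SimpleGraph.Walk.support_nil,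
        List.tail_cons, List.nodup_cons, List.mem_cons, List.not_mem_nil]
      have := hab.ne; have := hbc.ne; have := hcd.ne; have := hde.ne; have := hea.ne
      aesop
  exact h a w hcyc (by simp [w])

/-- cross-edge between neighborhoods of two triangle vertices gives a C5 -/
lemma cross_absurd {V : Type*} {G : SimpleGraph V} (h : NoBad G) {x y z u v : V}
    (hxy : G.Adj x y) (hyz : G.Adj y z) (hzx : G.Adj z x)
    (hxu : G.Adj x u) (hyv : G.Adj y v)
    (huy : u ≠ y) (huz : u ≠ z) (hvx : v ≠ x) (hvz : v ≠ z)
    (huv : u ≠ v) (hadj : G.Adj u v) : False :=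
  c5_absurd h hxu hadj hyv.symm hyz hzx hvx.symm hxy.ne huy huz hvz

/-- u adjacent to x,y and u' adjacent to y,z gives a C5 -/
lemma one_absurd {V : Type*} {G : SimpleGraph V} (h : NoBad G) {x y z u u' : V}
    (hxy : G.Adj x y) (hyz : G.Adj y z) (hzx : G.Adj z x)
    (hxu : G.Adj x u) (hyu : G.Adj y u) (hyu' : G.Adj y u') (hzu' : G.Adj z u')
    (huz : u ≠ z) (hu'x : u' ≠ x) (huu' : u ≠ u') : False :=
  c5_absurd h hyu hxu.symm hzx.symm hzu' hyu'.symm hxy.ne.symm hyz.ne huz huu' hu'x.symm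

lemma ie3 {V : Type*} [DecidableEq V] (A B C : Finset V) :
    A.card + B.card + C.card + (A ∩ B ∩ C).card =
      (A ∪ B ∪ C).card + ((A ∩ B).card + (A ∩ C).card + (B ∩ C).card) := by
  have h1 : (A ∪ B).card + (A ∩ B).card = A.card + B.card :=
    Finset.card_union_add_card_inter A B
  have h2 : (A ∪ B ∪ C).card + ((A ∪ B) ∩ C).card = (A ∪ B).card + C.card :=
    Finset.card_union_add_card_inter _ _
  have h3 : (A ∪ B) ∩ C = (A ∩ C) ∪ (B ∩ C) := Finset.union_inter_distrib_right ..
  have h4 : ((A ∩ C) ∪ (B ∩ C)).card + ((A ∩ C) ∩ (B ∩ C)).card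
      = (A ∩ C).card + (B ∩ C).card := Finset.card_union_add_card_inter _ _
  have h5 : (A ∩ C) ∩ (B ∩ C) = A ∩ B ∩ C := by ext w; simp only [Finset.mem_inter]; tauto
  rw [h3] at h2
  rw [h5] at h4
  omega

lemma nobad_induce {V : Type*} {G : SimpleGraph V} (h : NoBad G) (s : Set V) :
    NoBad (G.induce s) := by
  intro v c hc hlen
  let emb : G.induce s ↪g G := SimpleGraph.Embedding.induce s
  have hinj : Function.Injective emb.toHom := emb.injective
  have := hc.map hinj
  exact h _ _ this (by rwa [SimpleGraph.Walk.length_map])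

section del
variable {V : Type*} [Fintype V] [DecidableEq V] (G : SimpleGraph V) [DecidableRel G.Adj]

noncomputable instance instDecInduce (s : Set V) : DecidableRel (G.induce s).Adj :=
  fun a b => (inferInstance : DecidableRel G.Adj) a b

lemma delete_bound (v : V) [Fintype ((G.induce {w | w ≠ v}).edgeSet)] :
    G.edgeFinset.card ≤ G.degree v + (G.induce {w | w ≠ v}).edgeFinset.card := by
  classical
  have hsplit : G.edgeFinset.card =
      (G.edgeFinset.filter (fun e => v ∈ e)).card +
      (G.edgeFinset.filter (fun e => ¬ v ∈ e)).card :=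
    (Finset.card_filter_add_card_filter_not _).symm
  have h1 : (G.edgeFinset.filter (fun e => v ∈ e)).card = G.degree v := by
    rw [← SimpleGraph.card_incidenceFinset_eq_degree]
    congr 1
    rw [SimpleGraph.incidenceFinset_eq_filter]
  have h2 : (G.edgeFinset.filter (fun e => ¬ v ∈ e)).card ≤
      (G.induce {w | w ≠ v}).edgeFinset.card := by
    have hsub : G.edgeFinset.filter (fun e => ¬ v ∈ e) ⊆
        (G.induce {w | w ≠ v}).edgeFinset.image (Sym2.map (fun (a : ({w | w ≠ v} : Set V)) => (a : V))) := by
      intro e he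
      simp only [Finset.mem_filter, SimpleGraph.mem_edgeFinset] at he
      obtain ⟨he, hv⟩ := he
      induction e with
      | _ a b =>
        rw [SimpleGraph.mem_edgeSet] at he
        have ha : a ≠ v := fun h => hv (h ▸ Sym2.mem_mk_left a b)
        have hb : b ≠ v := fun h => hv (h ▸ Sym2.mem_mk_right a b)
        refine Finset.mem_image.2 ⟨s((⟨a, ha⟩ : ({w | w ≠ v} : Set V)), (⟨b, hb⟩ : ({w | w ≠ v} : Set V))), ?_, rfl⟩
        rw [SimpleGraph.mem_edgeFinset, SimpleGraph.mem_edgeSet]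
        exact he
    calc (G.edgeFinset.filter (fun e => ¬ v ∈ e)).card
        ≤ _ := Finset.card_le_card hsub
      _ ≤ _ := Finset.card_image_le
  omega
end del

section counts
variable {V : Type*} [Fintype V] [DecidableEq V] (G : SimpleGraph V) [DecidableRel G.Adj]

lemma edge_split (v : V) : G.edgeFinset.card =
    G.degree v + (G.edgeFinset.filter (fun e => ¬ v ∈ e)).card := by
  have hsplit : G.edgeFinset.card =
      (G.edgeFinset.filter (fun e => v ∈ e)).card +
      (G.edgeFinset.filter (fun e => ¬ v ∈ e)).card :=
    (Finset.card_filter_add_card_filter_not _).symm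
  have h1 : (G.edgeFinset.filter (fun e => v ∈ e)).card = G.degree v := by
    rw [← SimpleGraph.card_incidenceFinset_eq_degree]
    congr 1
    rw [SimpleGraph.incidenceFinset_eq_filter]
  omega

end counts

lemma hp4 {U : Type*} [Fintype U] [DecidableEq U] (H : SimpleGraph U) [DecidableRel H.Adj]
    (hcard : Fintype.card U = 4) (he : 4 ≤ H.edgeFinset.card) :
    ∃ p1 p2 p3 p4 : U, p1 ≠ p2 ∧ p1 ≠ p3 ∧ p1 ≠ p4 ∧ p2 ≠ p3 ∧ p2 ≠ p4 ∧ p3 ≠ p4 ∧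
      H.Adj p1 p2 ∧ H.Adj p2 p3 ∧ H.Adj p3 p4 := by
  have hdegle : ∀ w : U, H.degree w ≤ 3 := by
    intro w
    have := H.degree_lt_card_verts w
    omega
  by_cases hd : ∃ v, 3 ≤ H.degree v
  · obtain ⟨v, hv⟩ := hd
    have hdeg : H.degree v = 3 := le_antisymm (hdegle v) hv
    have hNv : H.neighborFinset v = Finset.univ.erase v := by
      apply Finset.eq_of_subset_of_card_le
      · intro w hw
        rw [SimpleGraph.mem_neighborFinset] at hw
        exact Finset.mem_erase.2 ⟨hw.ne', Finset.mem_univ w⟩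
      · rw [Finset.card_erase_of_mem (Finset.mem_univ v), Finset.card_univ, hcard,
          SimpleGraph.card_neighborFinset_eq_degree, hdeg]
    have hAdjAll : ∀ w : U, w ≠ v → H.Adj v w := by
      intro w hw
      rw [← SimpleGraph.mem_neighborFinset, hNv]
      exact Finset.mem_erase.2 ⟨hw, Finset.mem_univ w⟩
    have hsp := edge_split H v
    have hne : (H.edgeFinset.filter (fun e => ¬ v ∈ e)).Nonempty := by
      rw [← Finset.card_pos]; omega
    obtain ⟨e, he'⟩ := hne
    simp only [Finset.mem_filter, SimpleGraph.mem_edgeFinset] at he'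
    obtain ⟨hee, hve⟩ := he'
    induction e with
    | _ p q =>
      rw [SimpleGraph.mem_edgeSet] at hee
      have hp : p ≠ v := fun h => hve (h ▸ Sym2.mem_mk_left p q)
      have hq : q ≠ v := fun h => hve (h ▸ Sym2.mem_mk_right p q)
      have hr : (Finset.univ \ {v, p, q} : Finset U).Nonempty := by
        rw [← Finset.card_pos]
        have h3 : ({v, p, q} : Finset U).card ≤ 3 := by
          apply le_trans (Finset.card_insert_le _ _)
          have := Finset.card_insert_le p ({q} : Finset U)
          simp at this ⊢
          omega
        have := Finset.le_card_sdiff ({v, p, q} : Finset U) Finset.univ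
        rw [Finset.card_univ, hcard] at this
        omega
      obtain ⟨r, hrr⟩ := hr
      rw [Finset.mem_sdiff, Finset.mem_insert, Finset.mem_insert, Finset.mem_singleton] at hrr
      push_neg at hrr
      obtain ⟨-, hrv, hrp, hrq⟩ := hrr
      exact ⟨r, v, p, q, hrv, hrp, hrq, hp.symm, hq.symm, hee.ne,
        (hAdjAll r hrv).symm, hAdjAll p hp, hee⟩
  · push_neg at hd
    have hdeg2 : ∀ w : U, H.degree w = 2 := by
      intro w
      have hsum := H.sum_degrees_eq_twice_card_edges
      have hw : H.degree w ≤ 2 := by have := hd w; omega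
      by_contra hne
      have hw1 : H.degree w ≤ 1 := by omega
      rw [show (Finset.univ : Finset U) = insert w (Finset.univ.erase w) from
          (Finset.insert_erase (Finset.mem_univ w)).symm,
        Finset.sum_insert (Finset.notMem_erase w _)] at hsum
      have hrest : ∑ x ∈ Finset.univ.erase w, H.degree x ≤ 3 * 2 := by
        apply le_trans (Finset.sum_le_card_nsmul _ _ 2 (fun x _ => by have := hd x; omega))
        rw [Finset.card_erase_of_mem (Finset.mem_univ w), Finset.card_univ, hcard]
        simp
      omega
    have huniv : (Finset.univ : Finset U).Nonempty := by
      rw [← Finset.card_pos, Finset.card_univ, hcard]; omega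
    obtain ⟨a, -⟩ := huniv.exists_mem
    have hNa : (H.neighborFinset a).card = 2 := by
      rw [SimpleGraph.card_neighborFinset_eq_degree]; exact hdeg2 a
    obtain ⟨b, c, hbc, hNaeq⟩ := Finset.card_eq_two.1 hNa
    have hab : H.Adj a b := by
      rw [← SimpleGraph.mem_neighborFinset, hNaeq]; simp
    have hac : H.Adj a c := by
      rw [← SimpleGraph.mem_neighborFinset, hNaeq]; simp
    have hd' : (Finset.univ \ {a, b, c} : Finset U).Nonempty := by
      rw [← Finset.card_pos]
      have h3 : ({a, b, c} : Finset U).card ≤ 3 := by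
        apply le_trans (Finset.card_insert_le _ _)
        have := Finset.card_insert_le b ({c} : Finset U)
        simp at this ⊢
        omega
      have := Finset.le_card_sdiff ({a, b, c} : Finset U) Finset.univ
      rw [Finset.card_univ, hcard] at this
      omega
    obtain ⟨d, hdd⟩ := hd'.exists_mem
    rw [Finset.mem_sdiff, Finset.mem_insert, Finset.mem_insert, Finset.mem_singleton] at hdd
    push_neg at hdd
    obtain ⟨-, hda, hdb, hdc⟩ := hdd
    have hnad : ¬ H.Adj a d := by
      rw [← SimpleGraph.mem_neighborFinset, hNaeq]
      simp only [Finset.mem_insert, Finset.mem_singleton]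
      push_neg
      exact ⟨hdb, hdc⟩
    have hNd : H.neighborFinset d = Finset.univ \ {d, a} := by
      apply Finset.eq_of_subset_of_card_le
      · intro w hw
        rw [SimpleGraph.mem_neighborFinset] at hw
        rw [Finset.mem_sdiff, Finset.mem_insert, Finset.mem_singleton]
        push_neg
        exact ⟨Finset.mem_univ w, hw.ne', fun h => hnad (h ▸ hw).symm⟩
      · rw [SimpleGraph.card_neighborFinset_eq_degree, hdeg2]
        have hsub : ({d, a} : Finset U) ⊆ Finset.univ := Finset.subset_univ _
        rw [Finset.card_sdiff_of_subset hsub, Finset.card_univ, hcard]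
        rw [Finset.card_insert_of_notMem (by simpa using hda), Finset.card_singleton]
    have hdb' : H.Adj d b := by
      rw [← SimpleGraph.mem_neighborFinset, hNd]
      rw [Finset.mem_sdiff, Finset.mem_insert, Finset.mem_singleton]
      push_neg
      exact ⟨Finset.mem_univ b, Ne.symm hdb, hab.ne'⟩
    have hdc' : H.Adj d c := by
      rw [← SimpleGraph.mem_neighborFinset, hNd]
      rw [Finset.mem_sdiff, Finset.mem_insert, Finset.mem_singleton]
      push_neg
      exact ⟨Finset.mem_univ c, Ne.symm hdc, hac.ne'⟩
    exact ⟨b, a, c, d, hab.ne', fun h => hbc h, fun h => hdb h.symm, hac.ne,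
      fun h => hda h.symm, fun h => hdc h.symm, hab.symm, hac, hdc'.symm⟩

lemma subtype_card_ne {V : Type*} [Fintype V] [DecidableEq V] (x : V) :
    Fintype.card ({w | w ≠ x} : Set V) = Fintype.card V - 1 := by
  classical
  have e : ({w | w ≠ x} : Set V) ≃ {w : V // ¬ (w = x)} :=
    Equiv.subtypeEquivRight (fun w => Iff.rfl)
  rw [Fintype.card_congr e, Fintype.card_subtype_compl, Fintype.card_subtype_eq]

lemma n5 {V : Type*} [Fintype V] [DecidableEq V] (G : SimpleGraph V) [DecidableRel G.Adj]
    (h : NoBad G) (hcard : Fintype.card V = 5) (he : 8 ≤ G.edgeFinset.card) : False := by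
  have hsum := G.sum_degrees_eq_twice_card_edges
  have hdegle : ∀ w : V, G.degree w ≤ 4 := by
    intro w; have := G.degree_lt_card_verts w; omega
  have hx : ∃ x : V, 4 ≤ G.degree x := by
    by_contra hc
    push_neg at hc
    have : ∑ v : V, G.degree v ≤ 5 * 3 := by
      apply le_trans (Finset.sum_le_card_nsmul _ _ 3 (fun x _ => by have := hc x; omega))
      rw [Finset.card_univ, hcard]; simp
    omega
  obtain ⟨x, hx4⟩ := hx
  have hdeg : G.degree x = 4 := le_antisymm (hdegle x) hx4
  have hNx : G.neighborFinset x = Finset.univ.erase x := by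
    apply Finset.eq_of_subset_of_card_le
    · intro w hw
      rw [SimpleGraph.mem_neighborFinset] at hw
      exact Finset.mem_erase.2 ⟨hw.ne', Finset.mem_univ w⟩
    · rw [Finset.card_erase_of_mem (Finset.mem_univ x), Finset.card_univ, hcard,
        SimpleGraph.card_neighborFinset_eq_degree, hdeg]
  have hAdjAll : ∀ w : V, w ≠ x → G.Adj x w := by
    intro w hw
    rw [← SimpleGraph.mem_neighborFinset, hNx]
    exact Finset.mem_erase.2 ⟨hw, Finset.mem_univ w⟩
  have hcard4 : Fintype.card ({w | w ≠ x} : Set V) = 4 := by rw [subtype_card_ne, hcard]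
  have hdel := delete_bound G x
  have heH : 4 ≤ (G.induce {w | w ≠ x}).edgeFinset.card := by
    rw [hdeg] at hdel; omega
  obtain ⟨p1, p2, p3, p4, h12, h13, h14, h23, h24, h34, a12, a23, a34⟩ :=
    hp4 (G.induce {w | w ≠ x}) hcard4 heH
  have g12 : G.Adj p1 p2 := a12
  have g23 : G.Adj p2 p3 := a23
  have g34 : G.Adj p3 p4 := a34
  exact c5_absurd h (hAdjAll p1 p1.2) g12 g23 g34 ((hAdjAll p4 p4.2).symm)
    (Ne.symm p2.2) (Ne.symm p3.2)
    (fun hh => h13 (Subtype.ext hh)) (fun hh => h14 (Subtype.ext hh))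
    (fun hh => h24 (Subtype.ext hh))

section tri
variable {V : Type*} [Fintype V] [DecidableEq V] (G : SimpleGraph V) [DecidableRel G.Adj]

/-- neighbors of x other than y,z -/
def nbrS (x y z : V) : Finset V := G.neighborFinset x \ {y, z}

variable {G}

lemma mem_nbrS {x y z u : V} : u ∈ nbrS G x y z ↔ G.Adj x u ∧ u ≠ y ∧ u ≠ z := by
  simp only [nbrS, Finset.mem_sdiff, SimpleGraph.mem_neighborFinset, Finset.mem_insert,
    Finset.mem_singleton]
  tauto

lemma card_nbrS {x y z : V} (hxy : G.Adj x y) (hxz : G.Adj x z) (hyz : y ≠ z) :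
    (nbrS G x y z).card = G.degree x - 2 := by
  rw [nbrS, Finset.card_sdiff_of_subset (by
    intro w hw
    rw [SimpleGraph.mem_neighborFinset]
    rcases Finset.mem_insert.1 hw with h | h
    · exact h ▸ hxy
    · exact (Finset.mem_singleton.1 h) ▸ hxz)]
  rw [SimpleGraph.card_neighborFinset_eq_degree,
    Finset.card_insert_of_notMem (by simpa using hyz), Finset.card_singleton]

lemma nbrS_subset {x y z : V} : nbrS G x y z ⊆ Finset.univ \ {x, y, z} := by
  intro u hu
  rw [mem_nbrS] at hu
  simp only [Finset.mem_sdiff, Finset.mem_univ, true_and, Finset.mem_insert,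
    Finset.mem_singleton]
  push_neg
  exact ⟨hu.1.ne', hu.2.1, hu.2.2⟩

/-- no edges from a vertex in two neighborhoods into the union -/
lemma nw (h : NoBad G) {x y z u v : V}
    (hxy : G.Adj x y) (hyz : G.Adj y z) (hzx : G.Adj z x)
    (hxu : G.Adj x u) (hyu : G.Adj y u) (huz : u ≠ z)
    (hv : v ∈ nbrS G x y z ∪ nbrS G y x z ∪ nbrS G z x y) (hadj : G.Adj u v) : False := by
  rcases Finset.mem_union.1 hv with hv' | hvC
  · rcases Finset.mem_union.1 hv' with hvA | hvB
    · rw [mem_nbrS] at hvA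
      exact cross_absurd h hxy hyz hzx hvA.1 hyu hvA.2.1 hvA.2.2 hxu.ne' huz
        (fun hh => hadj.ne hh.symm) hadj.symm
    · rw [mem_nbrS] at hvB
      exact cross_absurd h hxy hyz hzx hxu hvB.1 hyu.ne' huz hvB.2.1 hvB.2.2 hadj.ne hadj
  · rw [mem_nbrS] at hvC
    exact cross_absurd h hzx.symm hyz.symm hxy.symm hxu hvC.1 huz hyu.ne' hvC.2.1 hvC.2.2
      hadj.ne hadj
end tri

section core
variable {V : Type*} [Fintype V] [DecidableEq V] {G : SimpleGraph V} [DecidableRel G.Adj]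

lemma nbr_sub_compl (h : NoBad G) {x y z u : V}
    (hxy : G.Adj x y) (hyz : G.Adj y z) (hzx : G.Adj z x)
    (hxu : G.Adj x u) (hyu : G.Adj y u) (huz : u ≠ z) :
    (nbrS G x y z ∪ nbrS G y x z ∪ nbrS G z x y).card ≤ Fintype.card V - G.degree u := by
  set W := nbrS G x y z ∪ nbrS G y x z ∪ nbrS G z x y with hW
  have hNu : G.neighborFinset u ⊆ Finset.univ \ W := by
    intro v hv
    rw [SimpleGraph.mem_neighborFinset] at hv
    rw [Finset.mem_sdiff]
    exact ⟨Finset.mem_univ v, fun hvW => nw h hxy hyz hzx hxu hyu huz hvW hv⟩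
  have h1 : G.degree u ≤ Fintype.card V - W.card := by
    rw [← SimpleGraph.card_neighborFinset_eq_degree]
    calc (G.neighborFinset u).card ≤ (Finset.univ \ W).card := Finset.card_le_card hNu
      _ = Fintype.card V - W.card := by
          rw [Finset.card_sdiff_of_subset (Finset.subset_univ W), Finset.card_univ]
  have h2 : W.card ≤ Fintype.card V := by
    calc W.card ≤ (Finset.univ : Finset V).card := Finset.card_le_card (Finset.subset_univ W)
      _ = Fintype.card V := Finset.card_univ
  have h3 : G.degree u ≤ Fintype.card V := by
    have := G.degree_lt_card_verts u; omega
  omega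

lemma core (h : NoBad G) (hn : 7 ≤ Fintype.card V)
    (hδ : ∀ w : V, Fintype.card V / 2 + 1 ≤ G.degree w) {x y z u : V}
    (hxy : G.Adj x y) (hyz : G.Adj y z) (hzx : G.Adj z x)
    (hxu : G.Adj x u) (hyu : G.Adj y u) (huz : u ≠ z) : False := by
  set n := Fintype.card V with hn'
  set A := nbrS G x y z with hA
  set B := nbrS G y x z with hB
  set C := nbrS G z x y with hC
  set W := A ∪ B ∪ C with hW
  have hcA : A.card = G.degree x - 2 := card_nbrS hxy hzx.symm hyz.ne
  have hcB : B.card = G.degree y - 2 := card_nbrS hxy.symm hyz hzx.ne'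
  have hcC : C.card = G.degree z - 2 := card_nbrS hzx hyz.symm hxy.ne
  have hWcard : W.card ≤ n - G.degree u := nbr_sub_compl h hxy hyz hzx hxu hyu huz
  have hdx := hδ x; have hdy := hδ y; have hdz := hδ z; have hdu := hδ u
  -- B ∩ C nonempty
  have hBC : 1 ≤ (B ∩ C).card := by
    have h1 : (B ∪ C).card + (B ∩ C).card = B.card + C.card :=
      Finset.card_union_add_card_inter B C
    have h2 : (B ∪ C).card ≤ W.card := Finset.card_le_card (by
      intro w hw; rw [hW]
      rcases Finset.mem_union.1 hw with hh | hh
      · exact Finset.mem_union.2 (Or.inl (Finset.mem_union.2 (Or.inr hh)))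
      · exact Finset.mem_union.2 (Or.inr hh))
    omega
  obtain ⟨u', hu'⟩ := Finset.card_pos.1 (by omega : 0 < (B ∩ C).card)
  have hu'B := (Finset.mem_inter.1 hu').1
  have hu'C := (Finset.mem_inter.1 hu').2
  rw [hB, mem_nbrS] at hu'B
  rw [hC, mem_nbrS] at hu'C
  by_cases huu' : u' = u
  case neg =>
    exact one_absurd h hxy hyz hzx hxu hyu hu'B.1 hu'C.1 huz hu'B.2.1 (Ne.symm huu')
  case pos =>
    subst huu'
    -- u ∈ A ∩ B ∩ C
    have huA : u' ∈ A := by rw [hA, mem_nbrS]; exact ⟨hxu, hyu.ne', huz⟩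
    have huB : u' ∈ B := Finset.mem_inter.1 hu' |>.1
    have huC : u' ∈ C := Finset.mem_inter.1 hu' |>.2
    have htriple : 1 ≤ (A ∩ B ∩ C).card := by
      apply Finset.card_pos.2
      exact ⟨u', by rw [Finset.mem_inter, Finset.mem_inter]; exact ⟨⟨huA, huB⟩, huC⟩⟩
    have hie := ie3 A B C
    rw [← hW] at hie
    have hWn3 : W.card ≤ n - 3 := by
      have hsub : W ⊆ Finset.univ \ {x, y, z} := by
        rw [hW]
        apply Finset.union_subset (Finset.union_subset ?_ ?_) ?_
        · exact nbrS_subset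
        · intro w hw
          have := nbrS_subset hw
          rw [Finset.mem_sdiff] at this ⊢
          refine ⟨this.1, ?_⟩
          simp only [Finset.mem_insert, Finset.mem_singleton] at this ⊢
          tauto
        · intro w hw
          have := nbrS_subset hw
          rw [Finset.mem_sdiff] at this ⊢
          refine ⟨this.1, ?_⟩
          simp only [Finset.mem_insert, Finset.mem_singleton] at this ⊢
          tauto
      have hc3 : ({x, y, z} : Finset V).card ≤ 3 := by
        apply le_trans (Finset.card_insert_le _ _)
        have := Finset.card_insert_le y ({z} : Finset V)
        simp at this ⊢; omega
      calc W.card ≤ (Finset.univ \ {x, y, z}).card := Finset.card_le_card hsub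
        _ = n - ({x, y, z} : Finset V).card := by
            rw [Finset.card_sdiff_of_subset (Finset.subset_univ _), Finset.card_univ]
        _ ≤ n - 3 + (3 - ({x, y, z} : Finset V).card) := by omega
        _ ≤ _ := by
            have : ({x, y, z} : Finset V).card = 3 := by
              rw [Finset.card_insert_of_notMem (by
                  simp only [Finset.mem_insert, Finset.mem_singleton]
                  push_neg
                  exact ⟨hxy.ne, fun hh => hzx.ne hh.symm⟩),
                Finset.card_insert_of_notMem (by simpa using hyz.ne),
                Finset.card_singleton]
            omega
    -- some pairwise element ≠ u'
    have hbig : 4 ≤ (A ∩ B).card + (A ∩ C).card + (B ∩ C).card := by omega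
    have hex : ∃ w', w' ≠ u' ∧ (w' ∈ A ∩ B ∨ w' ∈ A ∩ C ∨ w' ∈ B ∩ C) := by
      by_contra hc
      push_neg at hc
      have hsub1 : A ∩ B ⊆ {u'} := fun w hw => Finset.mem_singleton.2 (by
        by_contra hne
        exact (hc w hne).1 hw)
      have hsub2 : A ∩ C ⊆ {u'} := fun w hw => Finset.mem_singleton.2 (by
        by_contra hne
        exact (hc w hne).2.1 hw)
      have hsub3 : B ∩ C ⊆ {u'} := fun w hw => Finset.mem_singleton.2 (by
        by_contra hne
        exact (hc w hne).2.2 hw)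
      have := Finset.card_le_card hsub1
      have := Finset.card_le_card hsub2
      have := Finset.card_le_card hsub3
      simp only [Finset.card_singleton] at *
      omega
    obtain ⟨w', hwne, hwmem⟩ := hex
    have hu'x : G.Adj x u' := hxu
    have hu'y : G.Adj y u' := hyu
    have hu'z : G.Adj z u' := hu'C.1
    rcases hwmem with hw | hw | hw
    · rw [Finset.mem_inter, hA, hB, mem_nbrS, mem_nbrS] at hw
      exact one_absurd h hxy hyz hzx hw.1.1 hw.2.1 hu'y hu'z hw.1.2.2 hu'x.ne' hwne
    · rw [Finset.mem_inter, hA, hC, mem_nbrS, mem_nbrS] at hw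
      exact one_absurd h hzx.symm hyz.symm hxy.symm hw.1.1 hw.2.1 hu'z hu'y hw.1.2.1
        hu'x.ne' hwne
    · rw [Finset.mem_inter, hB, hC, mem_nbrS, mem_nbrS] at hw
      exact one_absurd h hxy hyz hzx hu'x hu'y hw.1.1 hw.2.1 huz hw.1.2.1 (Ne.symm hwne)
end core

section mindeg
variable {V : Type*} [Fintype V] [DecidableEq V] {G : SimpleGraph V} [DecidableRel G.Adj]

lemma mindeg (h : NoBad G) (hn : 7 ≤ Fintype.card V)
    (hδ : ∀ w : V, Fintype.card V / 2 + 1 ≤ G.degree w) : False := by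
  set n := Fintype.card V with hn'
  -- find an edge
  have hne : Nonempty V := Fintype.card_pos_iff.1 (by omega)
  obtain ⟨x⟩ := hne
  have hdx := hδ x
  have hNx : (G.neighborFinset x).Nonempty := by
    rw [← Finset.card_pos, SimpleGraph.card_neighborFinset_eq_degree]; omega
  obtain ⟨y, hy⟩ := hNx
  rw [SimpleGraph.mem_neighborFinset] at hy
  have hdy := hδ y
  -- common neighbor
  have hcommon : 1 ≤ (G.neighborFinset x ∩ G.neighborFinset y).card := by
    have h1 := Finset.card_union_add_card_inter (G.neighborFinset x) (G.neighborFinset y)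
    have h2 : (G.neighborFinset x ∪ G.neighborFinset y).card ≤ n := by
      calc _ ≤ (Finset.univ : Finset V).card := Finset.card_le_card (Finset.subset_univ _)
        _ = n := Finset.card_univ
    rw [SimpleGraph.card_neighborFinset_eq_degree, SimpleGraph.card_neighborFinset_eq_degree]
      at h1
    omega
  obtain ⟨z, hz⟩ := Finset.card_pos.1 (by omega : 0 < (G.neighborFinset x ∩ G.neighborFinset y).card)
  rw [Finset.mem_inter, SimpleGraph.mem_neighborFinset, SimpleGraph.mem_neighborFinset] at hz
  have hxy : G.Adj x y := hy
  have hyz : G.Adj y z := hz.2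
  have hzx : G.Adj z x := hz.1.symm
  have hdz := hδ z
  -- neighborhoods
  set A := nbrS G x y z with hA
  set B := nbrS G y x z with hB
  set C := nbrS G z x y with hC
  have hcA : A.card = G.degree x - 2 := card_nbrS hxy hzx.symm hyz.ne
  have hcB : B.card = G.degree y - 2 := card_nbrS hxy.symm hyz hzx.ne'
  have hcC : C.card = G.degree z - 2 := card_nbrS hzx hyz.symm hxy.ne
  have hie := ie3 A B C
  have hWn3 : (A ∪ B ∪ C).card ≤ n - 3 := by
    have hsub : A ∪ B ∪ C ⊆ Finset.univ \ {x, y, z} := by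
      apply Finset.union_subset (Finset.union_subset ?_ ?_) ?_
      · exact nbrS_subset
      · intro w hw
        have := nbrS_subset hw
        rw [Finset.mem_sdiff] at this ⊢
        refine ⟨this.1, ?_⟩
        simp only [Finset.mem_insert, Finset.mem_singleton] at this ⊢
        tauto
      · intro w hw
        have := nbrS_subset hw
        rw [Finset.mem_sdiff] at this ⊢
        refine ⟨this.1, ?_⟩
        simp only [Finset.mem_insert, Finset.mem_singleton] at this ⊢
        tauto
    have hc3 : ({x, y, z} : Finset V).card = 3 := by
      rw [Finset.card_insert_of_notMem (by
          simp only [Finset.mem_insert, Finset.mem_singleton]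
          push_neg
          exact ⟨hxy.ne, fun hh => hzx.ne hh.symm⟩),
        Finset.card_insert_of_notMem (by simpa using hyz.ne),
        Finset.card_singleton]
    calc (A ∪ B ∪ C).card ≤ (Finset.univ \ {x, y, z}).card := Finset.card_le_card hsub
      _ = n - 3 := by
          rw [Finset.card_sdiff_of_subset (Finset.subset_univ _), Finset.card_univ, hc3]
  have hpair : 1 ≤ (A ∩ B).card + (A ∩ C).card + (B ∩ C).card := by omega
  have hone : 0 < (A ∩ B).card ∨ 0 < (A ∩ C).card ∨ 0 < (B ∩ C).card := by omega
  rcases hone with hp | hp | hp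
  · obtain ⟨u, hu⟩ := Finset.card_pos.1 hp
    rw [Finset.mem_inter, hA, hB, mem_nbrS, mem_nbrS] at hu
    exact core h hn hδ hxy hyz hzx hu.1.1 hu.2.1 hu.1.2.2
  · obtain ⟨u, hu⟩ := Finset.card_pos.1 hp
    rw [Finset.mem_inter, hA, hC, mem_nbrS, mem_nbrS] at hu
    exact core h hn hδ hzx.symm hyz.symm hxy.symm hu.1.1 hu.2.1 hu.1.2.1
  · obtain ⟨u, hu⟩ := Finset.card_pos.1 hp
    rw [Finset.mem_inter, hB, hC, mem_nbrS, mem_nbrS] at hu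
    exact core h hn hδ hyz hzx hxy hu.1.1 hu.2.1 hu.1.2.1
end mindeg

section six
variable {V : Type*} [Fintype V] [DecidableEq V] {G : SimpleGraph V} [DecidableRel G.Adj]

lemma card4_compl {a b c d : V} (hcard : Fintype.card V = 6)
    (hab : a ≠ b) (hac : a ≠ c) (had : a ≠ d) (hbc : b ≠ c) (hbd : b ≠ d) (hcd : c ≠ d) :
    (Finset.univ \ ({a, b, c, d} : Finset V)).card = 2 := by
  have h4 : ({a, b, c, d} : Finset V).card = 4 := by
    rw [Finset.card_insert_of_notMem (by simp [hab, hac, had]),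
      Finset.card_insert_of_notMem (by simp [hbc, hbd]),
      Finset.card_insert_of_notMem (by simpa using hcd), Finset.card_singleton]
  rw [Finset.card_sdiff_of_subset (Finset.subset_univ _), Finset.card_univ, hcard, h4]

lemma small_nbhd (hcard : Fintype.card V = 6) {v a b c : V}
    (hδ : 3 ≤ G.degree v)
    (hav : ¬ G.Adj a v) (hbv : ¬ G.Adj b v) (hcv : ¬ G.Adj c v)
    (hab : a ≠ b) (hac : a ≠ c) (hbc : b ≠ c)
    (hvav : a ≠ v) (hvbv : b ≠ v) (hvcv : c ≠ v) : False := by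
  have hsub : G.neighborFinset v ⊆ Finset.univ \ ({a, b, c, v} : Finset V) := by
    intro w hw
    rw [SimpleGraph.mem_neighborFinset] at hw
    rw [Finset.mem_sdiff]
    refine ⟨Finset.mem_univ w, ?_⟩
    simp only [Finset.mem_insert, Finset.mem_singleton]
    push_neg
    refine ⟨fun hh => hav (hh ▸ hw.symm), fun hh => hbv (hh ▸ hw.symm),
      fun hh => hcv (hh ▸ hw.symm), hw.ne'⟩
  have := Finset.card_le_card hsub
  rw [SimpleGraph.card_neighborFinset_eq_degree,
    card4_compl hcard hab hac hvav hbc hvbv hvcv] at this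
  omega

lemma core6 (h : NoBad G) (hcard : Fintype.card V = 6)
    (hδ : ∀ w : V, 3 ≤ G.degree w) {x y z u : V}
    (hxy : G.Adj x y) (hyz : G.Adj y z) (hzx : G.Adj z x)
    (hxu : G.Adj x u) (hyu : G.Adj y u) (huz : u ≠ z) : False := by
  set A := nbrS G x y z with hA
  set B := nbrS G y x z with hB
  set C := nbrS G z x y with hC
  set W := A ∪ B ∪ C with hW
  have hWsub : W ⊆ Finset.univ \ {x, y, z} := by
    rw [hW]
    apply Finset.union_subset (Finset.union_subset ?_ ?_) ?_
    · exact nbrS_subset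
    · intro w hw
      have := nbrS_subset hw
      rw [Finset.mem_sdiff] at this ⊢
      refine ⟨this.1, ?_⟩
      simp only [Finset.mem_insert, Finset.mem_singleton] at this ⊢
      tauto
    · intro w hw
      have := nbrS_subset hw
      rw [Finset.mem_sdiff] at this ⊢
      refine ⟨this.1, ?_⟩
      simp only [Finset.mem_insert, Finset.mem_singleton] at this ⊢
      tauto
  have hc3 : ({x, y, z} : Finset V).card = 3 := by
    rw [Finset.card_insert_of_notMem (by
        simp only [Finset.mem_insert, Finset.mem_singleton]
        push_neg
        exact ⟨hxy.ne, fun hh => hzx.ne hh.symm⟩),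
      Finset.card_insert_of_notMem (by simpa using hyz.ne),
      Finset.card_singleton]
  -- every vertex is in T ∪ W
  have huniv : ∀ t : V, t ∈ ({x, y, z} : Finset V) ∪ W := by
    intro t
    by_contra ht
    rw [Finset.mem_union] at ht
    push_neg at ht
    obtain ⟨htT, htW⟩ := ht
    simp only [Finset.mem_insert, Finset.mem_singleton] at htT
    push_neg at htT
    obtain ⟨htx, hty, htz⟩ := htT
    have hnx : ¬ G.Adj x t := fun hh => htW (by
      rw [hW]
      exact Finset.mem_union.2 (Or.inl (Finset.mem_union.2 (Or.inl
        (mem_nbrS.2 ⟨hh, hty, htz⟩)))))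
    have hny : ¬ G.Adj y t := fun hh => htW (by
      rw [hW]
      exact Finset.mem_union.2 (Or.inl (Finset.mem_union.2 (Or.inr
        (mem_nbrS.2 ⟨hh, htx, htz⟩)))))
    have hnz : ¬ G.Adj z t := fun hh => htW (by
      rw [hW]
      exact Finset.mem_union.2 (Or.inr (mem_nbrS.2 ⟨hh, htx, hty⟩)))
    exact small_nbhd hcard (hδ t) hnx hny hnz hxy.ne (fun hh => hzx.ne hh.symm) hyz.ne
      (Ne.symm htx) (Ne.symm hty) (Ne.symm htz)
  have hWcard : W.card = 3 := by
    have h1 : W.card ≤ 3 := by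
      calc W.card ≤ (Finset.univ \ {x, y, z}).card := Finset.card_le_card hWsub
        _ = 3 := by rw [Finset.card_sdiff_of_subset (Finset.subset_univ _), Finset.card_univ, hcard, hc3]
    have h2 : (Finset.univ : Finset V) ⊆ ({x, y, z} : Finset V) ∪ W :=
      fun t _ => huniv t
    have h3 := Finset.card_le_card h2
    have h4 := Finset.card_union_le ({x, y, z} : Finset V) W
    rw [Finset.card_univ, hcard] at h3
    omega
  -- u has no neighbors in W
  have hNuW : ∀ v ∈ W, ¬ G.Adj u v := fun v hv hadj =>
    nw h hxy hyz hzx hxu hyu huz (hW ▸ hv) hadj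
  have hNu : G.neighborFinset u = ({x, y, z} : Finset V) := by
    apply Finset.eq_of_subset_of_card_le
    · intro w hw
      rw [SimpleGraph.mem_neighborFinset] at hw
      rcases Finset.mem_union.1 (huniv w) with hh | hh
      · exact hh
      · exact absurd hw (hNuW w hh)
    · rw [hc3, SimpleGraph.card_neighborFinset_eq_degree]
      exact hδ u
  have hzu : G.Adj z u := by
    have hz' : z ∈ G.neighborFinset u := by rw [hNu]; simp
    rw [SimpleGraph.mem_neighborFinset] at hz'
    exact hz'.symm
  -- u ∈ W
  have huW : u ∈ W := by
    rw [hW]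
    exact Finset.mem_union.2 (Or.inl (Finset.mem_union.2 (Or.inl
      (mem_nbrS.2 ⟨hxu, hyu.ne', huz⟩))))
  -- pick v ∈ W, v ≠ u
  obtain ⟨v, hvW, hvu⟩ := Finset.exists_mem_ne (s := W) (by omega) u
  have hvnT : v ∈ Finset.univ \ ({x, y, z} : Finset V) := hWsub hvW
  rw [Finset.mem_sdiff] at hvnT
  have hvT := hvnT.2
  simp only [Finset.mem_insert, Finset.mem_singleton] at hvT
  push_neg at hvT
  obtain ⟨hvx, hvy, hvz⟩ := hvT
  have hnuv : ¬ G.Adj u v := by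
    intro hadj
    have hv' : v ∈ G.neighborFinset u := by
      rw [SimpleGraph.mem_neighborFinset]; exact hadj
    rw [hNu] at hv'
    simp only [Finset.mem_insert, Finset.mem_singleton] at hv'
    tauto
  rcases Finset.mem_union.1 hvW with hv' | hvC
  · rcases Finset.mem_union.1 hv' with hvA | hvB
    · rw [hA, mem_nbrS] at hvA
      by_cases hyv : G.Adj y v
      · exact one_absurd h hxy hyz hzx hvA.1 hyv hyu hzu hvA.2.2 hxu.ne' hvu
      by_cases hzv : G.Adj z v
      · exact one_absurd h hzx.symm hyz.symm hxy.symm hvA.1 hzv hzu hyu hvA.2.1 hxu.ne' hvu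
      · exact small_nbhd hcard (hδ v) hyv hzv hnuv
          hyz.ne hyu.ne (Ne.symm huz) (Ne.symm hvA.2.1) (Ne.symm hvA.2.2) (Ne.symm hvu)
    · rw [hB, mem_nbrS] at hvB
      by_cases hxv : G.Adj x v
      · exact one_absurd h hxy hyz hzx hxv hvB.1 hyu hzu hvB.2.2 hxu.ne' hvu
      by_cases hzv : G.Adj z v
      · exact one_absurd h hyz hzx hxy hvB.1 hzv hzu hxu hvB.2.1 hyu.ne' hvu
      · exact small_nbhd hcard (hδ v) hxv hzv hnuv
          (fun hh => hzx.ne hh.symm) hxu.ne (Ne.symm huz) (Ne.symm hvB.2.1) (Ne.symm hvB.2.2) (Ne.symm hvu)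
  · rw [hC, mem_nbrS] at hvC
    by_cases hxv : G.Adj x v
    · exact one_absurd h hzx hxy hyz hvC.1 hxv hxu hyu hvC.2.2 huz hvu
    by_cases hyv : G.Adj y v
    · exact one_absurd h hyz hzx hxy hyv hvC.1 hzu hxu hvC.2.1 hyu.ne' hvu
    · exact small_nbhd hcard (hδ v) hxv hyv hnuv
        hxy.ne hxu.ne hyu.ne (Ne.symm hvC.2.1) (Ne.symm hvC.2.2) (Ne.symm hvu)
end six

lemma h6 {V : Type*} [Fintype V] [DecidableEq V] {G : SimpleGraph V} [DecidableRel G.Adj]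
    (h : NoBad G) (hcard : Fintype.card V = 6) (hδ : ∀ w : V, 3 ≤ G.degree w)
    (he : 10 ≤ G.edgeFinset.card) : False := by
  have hsum := G.sum_degrees_eq_twice_card_edges
  have hx : ∃ x : V, 4 ≤ G.degree x := by
    by_contra hc
    push_neg at hc
    have : ∑ v : V, G.degree v ≤ 6 * 3 := by
      apply le_trans (Finset.sum_le_card_nsmul _ _ 3 (fun x _ => by have := hc x; omega))
      rw [Finset.card_univ, hcard]; simp
    omega
  obtain ⟨x, hx4⟩ := hx
  -- find a triangle through x
  have htri : ∃ y z : V, G.Adj x y ∧ G.Adj y z ∧ G.Adj z x := by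
    by_cases hedge : ∃ y ∈ G.neighborFinset x, ∃ z ∈ G.neighborFinset x, G.Adj y z
    · obtain ⟨y, hy, z, hz, hyz⟩ := hedge
      rw [SimpleGraph.mem_neighborFinset] at hy hz
      exact ⟨y, z, hy, hyz, hz.symm⟩
    · exfalso
      push_neg at hedge
      have hNx : (G.neighborFinset x).Nonempty := by
        rw [← Finset.card_pos, SimpleGraph.card_neighborFinset_eq_degree]; omega
      obtain ⟨y, hy⟩ := hNx
      have hsub : G.neighborFinset y ⊆ Finset.univ \ G.neighborFinset x := by
        intro w hw
        rw [SimpleGraph.mem_neighborFinset] at hw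
        rw [Finset.mem_sdiff]
        exact ⟨Finset.mem_univ w, fun hwx => hedge y hy w hwx hw⟩
      have hcle := Finset.card_le_card hsub
      rw [Finset.card_sdiff_of_subset (Finset.subset_univ _), Finset.card_univ, hcard,
        SimpleGraph.card_neighborFinset_eq_degree, SimpleGraph.card_neighborFinset_eq_degree]
        at hcle
      have := hδ y
      omega
  obtain ⟨y, z, hxy, hyz, hzx⟩ := htri
  set A := nbrS G x y z with hA
  set B := nbrS G y x z with hB
  set C := nbrS G z x y with hC
  have hcA : A.card = G.degree x - 2 := card_nbrS hxy hzx.symm hyz.ne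
  have hcB : B.card = G.degree y - 2 := card_nbrS hxy.symm hyz hzx.ne'
  have hcC : C.card = G.degree z - 2 := card_nbrS hzx hyz.symm hxy.ne
  have hie := ie3 A B C
  have hWn3 : (A ∪ B ∪ C).card ≤ 3 := by
    have hsub : A ∪ B ∪ C ⊆ Finset.univ \ {x, y, z} := by
      apply Finset.union_subset (Finset.union_subset ?_ ?_) ?_
      · exact nbrS_subset
      · intro w hw
        have := nbrS_subset hw
        rw [Finset.mem_sdiff] at this ⊢
        refine ⟨this.1, ?_⟩
        simp only [Finset.mem_insert, Finset.mem_singleton] at this ⊢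
        tauto
      · intro w hw
        have := nbrS_subset hw
        rw [Finset.mem_sdiff] at this ⊢
        refine ⟨this.1, ?_⟩
        simp only [Finset.mem_insert, Finset.mem_singleton] at this ⊢
        tauto
    have hc3 : ({x, y, z} : Finset V).card = 3 := by
      rw [Finset.card_insert_of_notMem (by
          simp only [Finset.mem_insert, Finset.mem_singleton]
          push_neg
          exact ⟨hxy.ne, fun hh => hzx.ne hh.symm⟩),
        Finset.card_insert_of_notMem (by simpa using hyz.ne),
        Finset.card_singleton]
    calc (A ∪ B ∪ C).card ≤ (Finset.univ \ {x, y, z}).card := Finset.card_le_card hsub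
      _ = 3 := by rw [Finset.card_sdiff_of_subset (Finset.subset_univ _), Finset.card_univ, hcard, hc3]
  have hdy := hδ y
  have hdz := hδ z
  have hone : 0 < (A ∩ B).card ∨ 0 < (A ∩ C).card ∨ 0 < (B ∩ C).card := by omega
  rcases hone with hp | hp | hp
  · obtain ⟨u, hu⟩ := Finset.card_pos.1 hp
    rw [Finset.mem_inter, hA, hB, mem_nbrS, mem_nbrS] at hu
    exact core6 h hcard hδ hxy hyz hzx hu.1.1 hu.2.1 hu.1.2.2
  · obtain ⟨u, hu⟩ := Finset.card_pos.1 hp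
    rw [Finset.mem_inter, hA, hC, mem_nbrS, mem_nbrS] at hu
    exact core6 h hcard hδ hzx.symm hyz.symm hxy.symm hu.1.1 hu.2.1 hu.1.2.1
  · obtain ⟨u, hu⟩ := Finset.card_pos.1 hp
    rw [Finset.mem_inter, hB, hC, mem_nbrS, mem_nbrS] at hu
    exact core6 h hcard hδ hyz hzx hxy hu.1.1 hu.2.1 hu.1.2.1

def gbound (n : ℕ) : ℕ :=
  if n = 3 then 3 else if n = 4 then 6 else if n = 5 then 7 else n ^ 2 / 4

lemma gbound_eq {n : ℕ} (hn : 6 ≤ n) : gbound n = n ^ 2 / 4 := by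
  unfold gbound
  split_ifs <;> omega

lemma main_bound : ∀ (n : ℕ) (V : Type) [Fintype V] [DecidableEq V]
    (G : SimpleGraph V) [DecidableRel G.Adj],
    Fintype.card V = n → NoBad G → G.edgeFinset.card ≤ gbound n := by
  intro n
  induction n using Nat.strong_induction_on with
  | _ n ih =>
    intro V _ _ G _ hcard hnb
    have hdegle : ∀ w : V, G.degree w + 1 ≤ n := fun w => by
      have := G.degree_lt_card_verts w; omega
    have hdelete : ∀ v : V, G.edgeFinset.card ≤ G.degree v + gbound (n - 1) := by
      intro v
      have hpos : 0 < n := by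
        rw [← hcard]
        exact Fintype.card_pos_iff.2 ⟨v⟩
      have h1 := delete_bound G v
      have hcard' : Fintype.card ({w | w ≠ v} : Set V) = n - 1 := by
        rw [subtype_card_ne, hcard]
      have h2 := ih (n - 1) (by omega) ({w | w ≠ v} : Set V) (G.induce {w | w ≠ v})
        hcard' (nobad_induce hnb _)
      omega
    by_cases h3 : n ≤ 3
    · have h2e : 2 * G.edgeFinset.card ≤ n * (n - 1) := by
        rw [← G.sum_degrees_eq_twice_card_edges]
        calc ∑ v : V, G.degree v ≤ (Finset.univ : Finset V).card * (n-1) := by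
              apply Finset.sum_le_card_nsmul
              intro v _
              have := hdegle v; omega
          _ = n * (n - 1) := by rw [Finset.card_univ, hcard]
      have hg0 : gbound 0 = 0 := by norm_num [gbound]
      have hg1 : gbound 1 = 0 := by norm_num [gbound]
      have hg2 : gbound 2 = 1 := by norm_num [gbound]
      have hg3 : gbound 3 = 3 := by norm_num [gbound]
      interval_cases n <;> omega
    push_neg at h3
    by_cases h4 : n = 4
    · subst h4
      have hne : Nonempty V := Fintype.card_pos_iff.1 (by omega)
      obtain ⟨v⟩ := hne
      have hd := hdelete v
      rw [show (4:ℕ) - 1 = 3 from rfl] at hd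
      have hdg := hdegle v
      have hg3 : gbound 3 = 3 := by norm_num [gbound]
      have hg4 : gbound 4 = 6 := by norm_num [gbound]
      omega
    by_cases h5 : n = 5
    · subst h5
      by_contra hc
      push_neg at hc
      have hg5 : gbound 5 = 7 := by norm_num [gbound]
      exact n5 G hnb hcard (by omega)
    by_cases h6' : n = 6
    · subst h6'
      by_cases hlow : ∃ v : V, G.degree v ≤ 2
      · obtain ⟨v, hv⟩ := hlow
        have hd := hdelete v
        rw [show (6:ℕ) - 1 = 5 from rfl] at hd
        have hg5 : gbound 5 = 7 := by norm_num [gbound]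
        have hg6 : gbound 6 = 9 := by norm_num [gbound]
        omega
      · push_neg at hlow
        by_contra hc
        push_neg at hc
        have hg6 : gbound 6 = 9 := by norm_num [gbound]
        exact h6 hnb hcard (fun w => hlow w) (by omega)
    -- n ≥ 7
    have hn7 : 7 ≤ n := by omega
    by_cases hlow : ∃ v : V, G.degree v ≤ n / 2
    · obtain ⟨v, hv⟩ := hlow
      have hd := hdelete v
      have hg1 : gbound (n - 1) = (n - 1) ^ 2 / 4 := gbound_eq (by omega)
      have hg2 : gbound n = n ^ 2 / 4 := gbound_eq (by omega)
      rw [hg1] at hd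
      rw [hg2]
      obtain ⟨k, rfl⟩ : ∃ k, n = k + 7 := ⟨n - 7, by omega⟩
      have e1 : (k + 7 - 1) ^ 2 = k * k + 12 * k + 36 := by
        have : k + 7 - 1 = k + 6 := by omega
        rw [this]; ring
      have e2 : (k + 7) ^ 2 = k * k + 14 * k + 49 := by ring
      rw [e1] at hd
      rw [e2]
      rcases Nat.even_or_odd k with ⟨m, hm⟩ | ⟨m, hm⟩
      · have hq : k * k = 4 * (m * m) := by subst hm; ring
        omega
      · have hq : k * k = 4 * (m * m) + 4 * m + 1 := by subst hm; ring
        omega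
    · push_neg at hlow
      exact absurd hnb (fun _ => (mindeg (by assumption) (hcard ▸ hn7)
        (fun w => by have := hlow w; omega)).elim)

def bipG (n : ℕ) : SimpleGraph (Fin n) where
  Adj u v := (u.val < n / 2 ∧ ¬ v.val < n / 2) ∨ (v.val < n / 2 ∧ ¬ u.val < n / 2)
  symm := ⟨by intro u v h; tauto⟩
  loopless := ⟨by intro u; simp⟩

instance bipG_dec (n : ℕ) : DecidableRel (bipG n).Adj := fun u v =>
  inferInstanceAs (Decidable (_ ∨ _))

lemma bipG_nobad (n : ℕ) : NoBad (bipG n) := by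
  intro v c _ hlen
  have col : (bipG n).Coloring Bool :=
    SimpleGraph.Coloring.mk (fun u => decide (u.val < n / 2)) (by
      intro u w huw
      rcases huw with ⟨h1, h2⟩ | ⟨h1, h2⟩ <;> simp [h1, h2])
  have heven : Even c.length := (col.even_length_iff_congr c).2 Iff.rfl
  rw [Nat.even_iff] at heven
  omega

lemma filt_lt_card (n k : ℕ) (hk : k ≤ n) :
    (Finset.univ.filter (fun v : Fin n => v.val < k)).card = k := by
  have hbij : (Finset.univ.filter (fun v : Fin n => v.val < k)).card =
      (Finset.range k).card := by
    apply Finset.card_bij (fun v _ => v.val)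
    · intro v hv
      rw [Finset.mem_filter] at hv
      exact Finset.mem_range.2 hv.2
    · intro a ha b hb hab
      exact Fin.ext hab
    · intro j hj
      rw [Finset.mem_range] at hj
      exact ⟨⟨j, lt_of_lt_of_le hj hk⟩, Finset.mem_filter.2 ⟨Finset.mem_univ _, hj⟩, rfl⟩
  rw [hbij, Finset.card_range]

lemma bipG_degree (n : ℕ) (u : Fin n) :
    (bipG n).degree u = if u.val < n / 2 then n - n / 2 else n / 2 := by
  have hk : n / 2 ≤ n := Nat.div_le_self n 2
  rw [← SimpleGraph.card_neighborFinset_eq_degree]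
  by_cases hu : u.val < n / 2
  · rw [if_pos hu]
    have : (bipG n).neighborFinset u =
        Finset.univ.filter (fun v : Fin n => ¬ v.val < n / 2) := by
      ext w
      rw [SimpleGraph.mem_neighborFinset, Finset.mem_filter]
      constructor
      · rintro (⟨h1, h2⟩ | ⟨h1, h2⟩)
        · exact ⟨Finset.mem_univ _, h2⟩
        · exact absurd hu h2
      · rintro ⟨-, hw⟩
        exact Or.inl ⟨hu, hw⟩
    rw [this]
    have := Finset.card_filter_add_card_filter_not
      (s := (Finset.univ : Finset (Fin n))) (p := fun v : Fin n => v.val < n / 2)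
    rw [filt_lt_card n (n/2) hk] at this
    rw [Finset.card_univ, Fintype.card_fin] at this
    omega
  · rw [if_neg hu]
    have : (bipG n).neighborFinset u =
        Finset.univ.filter (fun v : Fin n => v.val < n / 2) := by
      ext w
      rw [SimpleGraph.mem_neighborFinset, Finset.mem_filter]
      constructor
      · rintro (⟨h1, h2⟩ | ⟨h1, h2⟩)
        · exact absurd h1 hu
        · exact ⟨Finset.mem_univ _, h1⟩
      · rintro ⟨-, hw⟩
        exact Or.inr ⟨hw, hu⟩
    rw [this, filt_lt_card n (n/2) hk]

lemma bipG_card_edges (n : ℕ) : (bipG n).edgeFinset.card = n ^ 2 / 4 := by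
  have hk : n / 2 ≤ n := Nat.div_le_self n 2
  have hsum := (bipG n).sum_degrees_eq_twice_card_edges
  have hsplit : ∑ u : Fin n, (bipG n).degree u = 2 * (n / 2 * (n - n / 2)) := by
    have h1 : ∑ u : Fin n, (bipG n).degree u =
        ∑ u ∈ Finset.univ.filter (fun v : Fin n => v.val < n / 2), (bipG n).degree u +
        ∑ u ∈ Finset.univ.filter (fun v : Fin n => ¬ v.val < n / 2), (bipG n).degree u :=
      (Finset.sum_filter_add_sum_filter_not _ _ _).symm
    have h2 : ∑ u ∈ Finset.univ.filter (fun v : Fin n => v.val < n / 2),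
        (bipG n).degree u = (n / 2) * (n - n / 2) := by
      rw [Finset.sum_congr rfl (fun u hu => by
        rw [bipG_degree, if_pos (Finset.mem_filter.1 hu).2])]
      rw [Finset.sum_const, filt_lt_card n (n/2) hk, smul_eq_mul]
    have h3 : ∑ u ∈ Finset.univ.filter (fun v : Fin n => ¬ v.val < n / 2),
        (bipG n).degree u = (n - n / 2) * (n / 2) := by
      rw [Finset.sum_congr rfl (fun u hu => by
        rw [bipG_degree, if_neg (Finset.mem_filter.1 hu).2])]
      rw [Finset.sum_const, smul_eq_mul]
      congr 1
      have := Finset.card_filter_add_card_filter_not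
        (s := (Finset.univ : Finset (Fin n))) (p := fun v : Fin n => v.val < n / 2)
      rw [filt_lt_card n (n/2) hk, Finset.card_univ, Fintype.card_fin] at this
      omega
    rw [h1, h2, h3]
    ring
  have hprod : n / 2 * (n - n / 2) = n ^ 2 / 4 := by
    rcases Nat.even_or_odd n with ⟨m, hm⟩ | ⟨m, hm⟩
    · subst hm
      have h1 : m + m = 2 * m := by ring
      have h2 : (m + m) / 2 = m := by omega
      rw [h2]
      have h3 : m + m - m = m := by omega
      rw [h3]
      have h4 : (m + m) ^ 2 = 4 * (m * m) := by ring
      rw [h4]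
      omega
    · subst hm
      have h2 : (2 * m + 1) / 2 = m := by omega
      rw [h2]
      have h3 : 2 * m + 1 - m = m + 1 := by omega
      rw [h3]
      have h4 : (2 * m + 1) ^ 2 = 4 * (m * (m + 1)) + 1 := by ring
      rw [h4]
      omega
  omega

theorem stmt_17 (n : ℕ) (hn : 6 ≤ n) :
    IsGreatest
      {e : ℕ | ∃ G : SimpleGraph (Fin n),
        (∀ (v : Fin n) (c : G.Walk v v), c.IsCycle → c.length % 4 ≠ 1) ∧
        G.edgeSet.ncard = e}
      (n ^ 2 / 4) := by
  constructor
  · refine ⟨bipG n, bipG_nobad n, ?_⟩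
    rw [← SimpleGraph.coe_edgeFinset, Set.ncard_coe_finset]
    exact bipG_card_edges n
  · rintro e ⟨G, hG, rfl⟩
    letI : DecidableRel G.Adj := Classical.decRel _
    rw [← SimpleGraph.coe_edgeFinset, Set.ncard_coe_finset]
    have := main_bound n (Fin n) G (Fintype.card_fin n) hG
    rwa [gbound_eq hn] at this
end
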